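/- arXiv:2103.01595 — 5 statements merged into one kernel-verified Lean document; each statement's English description precedes it below -/
import Mathlib

section
/- Let η be a finite Borel measure on the circle T = R/Z and 0 < s < 1. Define the Riesz potential R_s η(x) = ∫ |x−y|^{−s} dη(y) (with distance on T), and define the measure θ by θ(A) = ∫_A (R_s η)^{−1} dη. Then for every Borel set U, θ(U) ≤ |U|^s, where |U| denotes the diameter of U. -/
/-! On `U` the Riesz potential is at least `(diam U)^{-s} η(U)`, because every `y ∈ U` lies within
`diam U` of `x`. Integrating the reciprocal of this lower bound over `U` gives
`η(U) / ((diam U)^{-s} η(U)) ≤ (diam U)^s`. -/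

open MeasureTheory ProbabilityTheory Filter Set
open scoped ENNReal Topology

attribute [local instance] ZeroLEOneClass.factZeroLtOne

noncomputable instance : IsProbabilityMeasure (volume : Measure UnitAddCircle) :=
  ⟨UnitAddCircle.measure_univ⟩

theorem ENNReal.mul_inv_inv_mul_le (a t : ℝ≥0∞) : a * (t⁻¹ * a)⁻¹ ≤ t := by
  rcases eq_or_ne t 0 with rfl | ht0
  · rcases eq_or_ne a 0 with rfl | ha0 <;> simp [*]
  rcases eq_or_ne t ∞ with rfl | htt
  · exact le_top
  rw [ENNReal.mul_inv (by simp [htt]) (by simp [ht0]), inv_inv, mul_left_comm]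
  exact mul_le_of_le_one_right' (ENNReal.mul_inv_le_one a)

section RieszPotential

variable {X : Type*} [PseudoEMetricSpace X] [MeasurableSpace X] [OpensMeasurableSpace X]
  (μ : Measure X) {s : ℝ}

theorem ediam_rpow_neg_mul_le_lintegral_edist_rpow_neg (hs : 0 ≤ s) {U : Set X} {x : X}
    (hx : x ∈ U) : Metric.ediam U ^ (-s) * μ U ≤ ∫⁻ y, edist x y ^ (-s) ∂μ :=
  calc Metric.ediam U ^ (-s) * μ U = ∫⁻ _ in U, Metric.ediam U ^ (-s) ∂μ := by
        rw [setLIntegral_const, mul_comm]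
    _ ≤ ∫⁻ y in U, edist x y ^ (-s) ∂μ :=
        setLIntegral_mono (by fun_prop) fun y hy => by
          rw [ENNReal.rpow_neg, ENNReal.rpow_neg]
          exact ENNReal.inv_le_inv.2 (ENNReal.rpow_le_rpow (Metric.edist_le_ediam_of_mem hx hy) hs)
    _ ≤ ∫⁻ y, edist x y ^ (-s) ∂μ := setLIntegral_le_lintegral _ _

theorem setLIntegral_inv_lintegral_edist_rpow_neg_le (hs : 0 < s) (U : Set X) :
    ∫⁻ x in U, (∫⁻ y, edist x y ^ (-s) ∂μ)⁻¹ ∂μ ≤ Metric.ediam U ^ s :=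
  calc ∫⁻ x in U, (∫⁻ y, edist x y ^ (-s) ∂μ)⁻¹ ∂μ
      ≤ ∫⁻ _ in U, (Metric.ediam U ^ (-s) * μ U)⁻¹ ∂μ :=
        setLIntegral_mono_ae aemeasurable_const <| ae_of_all _ fun x hx =>
          ENNReal.inv_le_inv.2 (ediam_rpow_neg_mul_le_lintegral_edist_rpow_neg μ hs.le hx)
    _ = μ U * ((Metric.ediam U ^ s)⁻¹ * μ U)⁻¹ := by
        rw [setLIntegral_const, mul_comm, ENNReal.rpow_neg]
    _ ≤ Metric.ediam U ^ s := ENNReal.mul_inv_inv_mul_le _ _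

end RieszPotential

theorem stmt0_general (η : Measure UnitAddCircle)
    (s : ℝ) (hs0 : 0 < s)
    (U : Set UnitAddCircle) :
    ∫⁻ x in U, (∫⁻ y, (edist x y) ^ (-s) ∂η)⁻¹ ∂η ≤ (EMetric.diam U) ^ s :=
  setLIntegral_inv_lintegral_edist_rpow_neg_le η hs0 U

/-- Riesz potential mass distribution: if `η` is a finite Borel measure on the circle,
`0 < s < 1`, and `θ` has density `(R_s η)⁻¹` with respect to `η`, then `θ U ≤ |U|^s`. -/
theorem stmt0 (η : Measure UnitAddCircle) [IsFiniteMeasure η]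
    (s : ℝ) (hs0 : 0 < s) (hs1 : s < 1)
    (U : Set UnitAddCircle) (hU : MeasurableSet U) :
    ∫⁻ x in U, (∫⁻ y, (edist x y) ^ (-s) ∂η)⁻¹ ∂η ≤ (EMetric.diam U) ^ s :=
  stmt0_general η s hs0 U
end

section
/- Let (ω_n) be an i.i.d. sequence uniform on T and (r_n) a sequence of positive reals tending to 0. If ∑_{n≥1} n(1−r_n)^n < ∞, then almost surely there exists N such that for all n ≥ N the circle T is covered by the union of the balls B(ω_1, r_n), …, B(ω_n, r_n); consequently, almost surely every point y ∈ T satisfies: for all sufficiently large N there exists n ≤ N with ‖ω_n − y‖ < r_N. -/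
/-!
If the circle is not covered by the `n` balls `B(ω_k, r_n)`, some point of the grid
`{j / (4n)}` lies within `r_n / 2` of an uncovered point, hence at distance at least `r_n / 2`
from every `ω_k`. By independence each grid point is missed in this way with probability
`(1 - r_n)^n`, so the circle fails to be covered with probability at most `4n (1 - r_n)^n`, which is
summable, and Borel–Cantelli applies. The grid is fine enough because summability forces
`r_n ≥ 1 / (2n)` eventually: otherwise Bernoulli's inequality gives `n (1 - r_n)^n > n / 2`.
-/

open MeasureTheory ProbabilityTheory Filter Set
open scoped ENNReal Topology

lemma ENNReal.ofReal_pow_le (x : ℝ) (n : ℕ) : ENNReal.ofReal x ^ n ≤ ENNReal.ofReal (x ^ n) := by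
  rcases le_total 0 x with hx | hx
  · exact (ENNReal.ofReal_pow hx n).ge
  · rcases n with _ | n
    · simp
    · simp [ENNReal.ofReal_of_nonpos hx]

lemma eventually_one_div_two_mul_le_of_tendsto {r : ℕ → ℝ}
    (h : Tendsto (fun n : ℕ => n * (1 - r n) ^ n) atTop (𝓝 0)) :
    ∀ᶠ n : ℕ in atTop, 1 / (2 * n) ≤ r n := by
  filter_upwards [h.eventually_lt_const (by norm_num : (0 : ℝ) < 1 / 2), eventually_ge_atTop 1]
    with n hsmall hn
  by_contra! hr
  have hn' : (1 : ℝ) ≤ n := by exact_mod_cast hn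
  have hnr : n * r n < 1 / 2 := by
    calc n * r n < n * (1 / (2 * n)) := by gcongr
      _ = 1 / 2 := by field_simp
  have hr1 : r n ≤ 1 := hr.le.trans ((div_le_one (by positivity)).2 (by linarith))
  have hbern := one_add_mul_sub_le_pow (by linarith : -1 ≤ 1 - r n) n
  have hpow : 1 / 2 < (1 - r n) ^ n := by linarith
  nlinarith

namespace MeasureTheory

lemma ae_eventually_notMem_of_summable {α : Type*} [MeasurableSpace α] {μ : Measure α}
    {s : ℕ → Set α} {f : ℕ → ℝ} (hf : Summable f)
    (hs : ∀ᶠ n in atTop, μ (s n) ≤ ENNReal.ofReal (f n)) :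
    ∀ᵐ a ∂μ, ∀ᶠ n in atTop, a ∉ s n := by
  obtain ⟨N, hN⟩ := eventually_atTop.1 hs
  set t : ℕ → Set α := fun n => ⋃ _ : N ≤ n, s n
  have ht : ∑' n, μ (t n) ≠ ∞ := by
    refine ne_top_of_le_ne_top (ENNReal.tsum_coe_ne_top_iff_summable.2 hf.toNNReal)
      (ENNReal.tsum_le_tsum fun n => ?_)
    by_cases hn : N ≤ n
    · simpa [t, hn, ENNReal.ofReal] using hN n hn
    · simp [t, hn]
  filter_upwards [ae_eventually_notMem ht] with a ha
  filter_upwards [ha, eventually_ge_atTop N] with n hn hNn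
  simpa [t, hNn] using hn

end MeasureTheory

lemma ProbabilityTheory.iIndepFun.measure_biInter_preimage_eq_pow {Ω ι β : Type*}
    [MeasurableSpace Ω] [MeasurableSpace β] {μ : Measure Ω} {ν : Measure β} {ω : ι → Ω → β}
    (hindep : iIndepFun ω μ) (hmeas : ∀ i, Measurable (ω i)) (hlaw : ∀ i, μ.map (ω i) = ν)
    (s : Finset ι) {B : Set β} (hB : MeasurableSet B) :
    μ (⋂ i ∈ s, ω i ⁻¹' B) = ν B ^ s.card := by
  rw [hindep.meas_biInter fun i _ => ⟨B, hB, rfl⟩, ← Finset.prod_const]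
  exact Finset.prod_congr rfl fun i _ => by rw [← hlaw i, Measure.map_apply (hmeas i) hB]

namespace UnitAddCircle

lemma exists_dist_coe_div_lt {m : ℕ} (hm : 0 < m) (y : UnitAddCircle) :
    ∃ j ∈ Finset.range m, dist y ((j / m : ℝ) : UnitAddCircle) < 1 / m := by
  obtain ⟨x, rfl⟩ := QuotientAddGroup.mk_surjective y
  have hm' : (0 : ℝ) < m := by exact_mod_cast hm
  set u := (m : ℝ) * Int.fract x
  have hu : 0 ≤ u := by positivity
  refine ⟨⌊u⌋₊, Finset.mem_range.2 ?_, ?_⟩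
  · exact (Nat.floor_lt hu).2 (by simpa [u] using mul_lt_of_lt_one_right hm' (Int.fract_lt_one x))
  rw [← AddCircle.coe_fract, dist_eq_norm, ← AddCircle.coe_sub]
  refine (QuotientAddGroup.norm_mk_le_norm ..).trans_lt ?_
  have hdiff : Int.fract x - ⌊u⌋₊ / m = (u - ⌊u⌋₊) / m := by field_simp; ring
  rw [hdiff, norm_div, Real.norm_of_nonneg hm'.le, div_lt_div_iff_of_pos_right hm',
    Real.norm_of_nonneg (sub_nonneg.2 (Nat.floor_le hu))]
  linarith [Nat.lt_floor_add_one u]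

lemma volume_compl_ball (c : UnitAddCircle) {ρ : ℝ} (hρ : 0 ≤ ρ) :
    volume (Metric.ball c ρ)ᶜ = ENNReal.ofReal (1 - 2 * ρ) := by
  rw [measure_compl Metric.isOpen_ball.measurableSet (measure_ne_top _ _), measure_univ,
    ← measure_congr AddCircle.closedBall_ae_eq_ball, AddCircle.volume_closedBall]
  rcases le_total (2 * ρ) 1 with h | h
  · rw [min_eq_right h, ← ENNReal.ofReal_one, ← ENNReal.ofReal_sub _ (by positivity)]
  · rw [min_eq_left h, ENNReal.ofReal_one, tsub_self, ENNReal.ofReal_of_nonpos (by linarith)]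

end UnitAddCircle

lemma measure_setOf_exists_forall_le_dist_le {Ω ι : Type*} [MeasurableSpace Ω] {μ : Measure Ω}
    {ω : ι → Ω → UnitAddCircle} (hmeas : ∀ i, Measurable (ω i)) (hindep : iIndepFun ω μ)
    (hunif : ∀ i, μ.map (ω i) = volume) {m : ℕ} (hm : 0 < m) {ρ : ℝ} (hρ : 2 / m ≤ ρ)
    (s : Finset ι) :
    μ {a | ∃ y : UnitAddCircle, ∀ i ∈ s, ρ ≤ dist (ω i a) y} ≤
      m * ENNReal.ofReal (1 - ρ) ^ s.card := by
  set grid : ℕ → UnitAddCircle := fun j => ((j / m : ℝ) : UnitAddCircle)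
  have hm' : (0 : ℝ) < m := by exact_mod_cast hm
  have hgrid : 1 / (m : ℝ) ≤ ρ / 2 := by linarith [show 2 / (m : ℝ) = 2 * (1 / m) by ring]
  have hsub : {a | ∃ y : UnitAddCircle, ∀ i ∈ s, ρ ≤ dist (ω i a) y} ⊆
      ⋃ j ∈ Finset.range m, ⋂ i ∈ s, ω i ⁻¹' (Metric.ball (grid j) (ρ / 2))ᶜ := by
    rintro a ⟨y, hy⟩
    obtain ⟨j, hj, hjy⟩ := UnitAddCircle.exists_dist_coe_div_lt hm y
    refine mem_iUnion₂.2 ⟨j, hj, mem_iInter₂.2 fun i hi => ?_⟩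
    simp only [mem_preimage, mem_compl_iff, Metric.mem_ball, not_lt]
    linarith [hy i hi, dist_triangle (ω i a) (grid j) y, dist_comm y (grid j)]
  calc μ {a | ∃ y : UnitAddCircle, ∀ i ∈ s, ρ ≤ dist (ω i a) y}
      ≤ μ (⋃ j ∈ Finset.range m, ⋂ i ∈ s, ω i ⁻¹' (Metric.ball (grid j) (ρ / 2))ᶜ) :=
        measure_mono hsub
    _ ≤ ∑ j ∈ Finset.range m, μ (⋂ i ∈ s, ω i ⁻¹' (Metric.ball (grid j) (ρ / 2))ᶜ) :=
        measure_biUnion_finset_le _ _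
    _ = ∑ j ∈ Finset.range m, ENNReal.ofReal (1 - ρ) ^ s.card := by
        refine Finset.sum_congr rfl fun j _ => ?_
        rw [hindep.measure_biInter_preimage_eq_pow hmeas hunif s
          Metric.isOpen_ball.measurableSet.compl,
          UnitAddCircle.volume_compl_ball _ ((div_nonneg zero_le_one hm'.le).trans hgrid),
          mul_div_cancel₀ _ two_ne_zero]
    _ = m * ENNReal.ofReal (1 - ρ) ^ s.card := by simp

theorem stmt4_general {Ω : Type*} [MeasurableSpace Ω] (μ : Measure Ω)
    (ω : ℕ → Ω → UnitAddCircle) (hmeas : ∀ n, Measurable (ω n))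
    (hindep : iIndepFun ω μ)
    (hunif : ∀ n, Measure.map (ω n) μ = volume)
    (r : ℕ → ℝ)
    (hsum : Summable (fun n : ℕ => (n : ℝ) * (1 - r n) ^ n)) :
    ∀ᵐ a ∂μ,
      (∃ N : ℕ, ∀ n ≥ N, ∀ y : UnitAddCircle, ∃ k ∈ Finset.Icc 1 n, dist (ω k a) y < r n) ∧
      (∀ y : UnitAddCircle, ∀ᶠ N in atTop, ∃ n ∈ Finset.Icc 1 N, dist (ω n a) y < r N) := by
  have hfail : ∀ᶠ n : ℕ in atTop,
      μ {a | ∃ y : UnitAddCircle, ∀ k ∈ Finset.Icc 1 n, r n ≤ dist (ω k a) y} ≤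
        ENNReal.ofReal (4 * (n * (1 - r n) ^ n)) := by
    filter_upwards [eventually_one_div_two_mul_le_of_tendsto hsum.tendsto_atTop_zero,
      eventually_gt_atTop 0] with n hr hn
    have hn' : (0 : ℝ) < n := by exact_mod_cast hn
    calc _ ≤ ((4 * n : ℕ) : ℝ≥0∞) * ENNReal.ofReal (1 - r n) ^ (Finset.Icc 1 n).card :=
          measure_setOf_exists_forall_le_dist_le hmeas hindep hunif (by positivity)
            (by convert hr using 1; push_cast; field_simp; ring) _
      _ ≤ ENNReal.ofReal (4 * (n * (1 - r n) ^ n)) := by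
          rw [Nat.card_Icc, Nat.add_sub_cancel, ENNReal.ofReal_mul (by positivity),
            ENNReal.ofReal_mul (by positivity), ENNReal.ofReal_ofNat, ENNReal.ofReal_natCast,
            ← mul_assoc, Nat.cast_mul, Nat.cast_ofNat]
          gcongr
          exact ENNReal.ofReal_pow_le _ _
  have hcover : ∀ᵐ a ∂μ, ∀ᶠ n in atTop,
      ∀ y : UnitAddCircle, ∃ k ∈ Finset.Icc 1 n, dist (ω k a) y < r n := by
    filter_upwards [ae_eventually_notMem_of_summable (hsum.mul_left 4) hfail] with a ha
    filter_upwards [ha] with n hn y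
    by_contra! h
    exact hn ⟨y, h⟩
  filter_upwards [hcover] with a ha
  exact ⟨eventually_atTop.1 ha, fun y => ha.mono fun n hn => hn y⟩

/-- If `∑ n (1 - r_n)^n < ∞`, then almost surely the circle is eventually covered by
`B(ω_1, r_n), …, B(ω_n, r_n)`; consequently a.s. every point is uniformly approximated. -/
theorem stmt4 {Ω : Type*} [MeasurableSpace Ω] (μ : Measure Ω) [IsProbabilityMeasure μ]
    (ω : ℕ → Ω → UnitAddCircle) (hmeas : ∀ n, Measurable (ω n))
    (hindep : iIndepFun ω μ)
    (hunif : ∀ n, Measure.map (ω n) μ = volume)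
    (r : ℕ → ℝ) (hrpos : ∀ n, 1 ≤ n → 0 < r n) (hrlim : Tendsto r atTop (𝓝 0))
    (hsum : Summable (fun n : ℕ => (n : ℝ) * (1 - r n) ^ n)) :
    ∀ᵐ a ∂μ,
      (∃ N : ℕ, ∀ n ≥ N, ∀ y : UnitAddCircle, ∃ k ∈ Finset.Icc 1 n, dist (ω k a) y < r n) ∧
      (∀ y : UnitAddCircle, ∀ᶠ N in atTop, ∃ n ∈ Finset.Icc 1 N, dist (ω n a) y < r N) :=
  stmt4_general μ ω hmeas hindep hunif r hsum
end

section
/- Let (ω_n) be i.i.d. uniform on T and let (r_n) be a decreasing sequence of positive reals. Then the event {Lebesgue measure of U(ω) equals 1} has probability 0 or 1; equivalently, either almost surely λ(U(ω)) = 1 or almost surely λ(U(ω)) = 0. -/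
/-!
By Fubini, `∫ λ(U(ω)) dP(ω) = ∫ P(y ∈ U(ω)) dλ(y)`. Translating every `ω_n` by the same amount
preserves the product law of `(ω_n)`, so `P(y ∈ U(ω))` does not depend on `y`; and it is `0` or `1`.
Indeed, if `r_N ≥ L > 0` for all `N`, the second Borel–Cantelli lemma makes some `ω_n` fall into
the ball of radius `L` around `y` almost surely. Otherwise `r_N` eventually drops below every
`ε > 0`, so almost surely (no `ω_n` equals `y`) the event does not change when finitely many `ω_n`
are discarded; it is then a tail event and Kolmogorov's zero-one law applies. Since `0 ≤ λ(U(ω)) ≤ 1`, an expectation of `0` or `1`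
forces `λ(U(ω))` to be almost surely `0` or almost surely `1`.
-/

open MeasureTheory ProbabilityTheory Filter Set
open scoped ENNReal Topology

attribute [local instance] ZeroLEOneClass.factZeroLtOne

section Hitting

variable {X : Type*} [PseudoMetricSpace X] {r : ℕ → ℝ} {y : X} {k m : ℕ} {x : ℕ → X}

/-- In the paper's notation, `U(ω) = {y | ω ∈ eventuallyAlwaysHitting r y 1}`. -/
def eventuallyAlwaysHitting (r : ℕ → ℝ) (y : X) (k : ℕ) : Set (ℕ → X) :=
  {x | ∀ᶠ N in atTop, ∃ n ∈ Finset.Icc k N, dist (x n) y < r N}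

lemma eventuallyAlwaysHitting_anti (r : ℕ → ℝ) (y : X) :
    Antitone (eventuallyAlwaysHitting r y) := by
  intro k m hkm x hx
  filter_upwards [hx] with N ⟨n, hn, hd⟩
  exact ⟨n, Finset.Icc_subset_Icc_left hkm hn, hd⟩

lemma mem_eventuallyAlwaysHitting_of_frequently {L : ℝ} (hr : ∀ N, L ≤ r N)
    (hx : ∃ᶠ n in atTop, dist (x n) y < L) : x ∈ eventuallyAlwaysHitting r y k := by
  obtain ⟨n, hn, hkn⟩ := (hx.and_eventually (eventually_ge_atTop k)).exists
  filter_upwards [eventually_ge_atTop n] with N hN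
  exact ⟨n, Finset.mem_Icc.2 ⟨hkn, hN⟩, hn.trans_le (hr N)⟩

lemma mem_eventuallyAlwaysHitting_of_dist_pos (hr : ∀ ε > 0, ∀ᶠ N in atTop, r N < ε)
    (hx : ∀ n < m, 0 < dist (x n) y) (h : x ∈ eventuallyAlwaysHitting r y k) :
    x ∈ eventuallyAlwaysHitting r y m := by
  have hfar : ∀ᶠ N in atTop, ∀ n ∈ Finset.range m, r N < dist (x n) y :=
    (Finset.eventually_all _).2 fun n hn => hr _ (hx n (Finset.mem_range.1 hn))
  filter_upwards [h, hfar] with N ⟨n, hn, hd⟩ hfar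
  refine ⟨n, Finset.mem_Icc.2 ⟨?_, (Finset.mem_Icc.1 hn).2⟩, hd⟩
  by_contra! hnm
  exact lt_asymm hd (hfar n (Finset.mem_range.2 hnm))

lemma measurableSet_setOf_mem_eventuallyAlwaysHitting [MeasurableSpace X] [OpensMeasurableSpace X]
    [SecondCountableTopology X] {β : Type*} {_ : MeasurableSpace β} {f : ℕ → β → X} {g : β → X}
    (hf : ∀ n ≥ k, Measurable (f n)) (hg : Measurable g) :
    MeasurableSet {b | (fun n => f n b) ∈ eventuallyAlwaysHitting r (g b) k} := by
  simp only [eventuallyAlwaysHitting, mem_ofPred_eq]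
  simp only [eventually_atTop, ofPred_exists, ofPred_forall]
  refine .iUnion fun M => .iInter fun N => .iInter fun _ => .iUnion fun n => ?_
  by_cases hn : n ∈ Finset.Icc k N
  · simpa only [hn, true_and] using
      measurableSet_lt ((hf n (Finset.mem_Icc.1 hn).1).dist hg) measurable_const
  · simp only [hn, false_and, ofPred_false, MeasurableSet.empty]

lemma measurableSet_eventuallyAlwaysHitting [MeasurableSpace X] [OpensMeasurableSpace X]
    [SecondCountableTopology X] : MeasurableSet (eventuallyAlwaysHitting r y k) :=
  measurableSet_setOf_mem_eventuallyAlwaysHitting (r := r) (k := k)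
    (f := fun n (x : ℕ → X) => x n) (g := fun _ => y)
    (fun n _ => measurable_pi_apply n) measurable_const

lemma preimage_add_eventuallyAlwaysHitting {G : Type*} [Add G] [PseudoMetricSpace G]
    [IsIsometricVAdd Gᵃᵒᵖ G] (r : ℕ → ℝ) (y t : G) (k : ℕ) :
    (fun x n => x n + t) ⁻¹' eventuallyAlwaysHitting r (y + t) k
      = eventuallyAlwaysHitting r y k := by
  ext x
  simp only [eventuallyAlwaysHitting, mem_preimage, mem_ofPred_eq, dist_add_right]

end Hitting

section IID

variable {Ω X : Type*} [MeasurableSpace Ω] {μ : Measure Ω}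
  [MetricSpace X] [MeasurableSpace X] [BorelSpace X]
  {ν : Measure X} {ω : ℕ → Ω → X} {r : ℕ → ℝ} {y : X} {k : ℕ}

lemma infinitePi_eventuallyAlwaysHitting_add [SecondCountableTopology X] [Add X]
    [MeasurableAdd X] [IsIsometricVAdd Xᵃᵒᵖ X]
    (ν : Measure X) [IsProbabilityMeasure ν] [ν.IsAddRightInvariant] (y t : X) :
    Measure.infinitePi (fun _ : ℕ => ν) (eventuallyAlwaysHitting r (y + t) k)
      = Measure.infinitePi (fun _ : ℕ => ν) (eventuallyAlwaysHitting r y k) := by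
  have hshift : MeasurePreserving (fun (x : ℕ → X) n => x n + t)
      (Measure.infinitePi fun _ => ν) (Measure.infinitePi fun _ => ν) :=
    ⟨by fun_prop, by
      rw [Measure.infinitePi_map_pi _ fun _ => measurable_add_const t,
        (measurePreserving_add_right ν t).map_eq]⟩
  rw [← preimage_add_eventuallyAlwaysHitting r y t k,
    hshift.measure_preimage measurableSet_eventuallyAlwaysHitting.nullMeasurableSet]

lemma measure_eventuallyAlwaysHitting_add [SecondCountableTopology X] [Add X]
    [MeasurableAdd X] [IsIsometricVAdd Xᵃᵒᵖ X] [IsProbabilityMeasure ν] [ν.IsAddRightInvariant]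
    (hmeas : ∀ n, Measurable (ω n)) (hindep : iIndepFun ω μ) (hlaw : ∀ n, μ.map (ω n) = ν)
    (y t : X) :
    μ {a | (fun n => ω n a) ∈ eventuallyAlwaysHitting r (y + t) k}
      = μ {a | (fun n => ω n a) ∈ eventuallyAlwaysHitting r y k} := by
  have hlaw_seq : ∀ S, MeasurableSet S →
      μ {a | (fun n => ω n a) ∈ S} = Measure.infinitePi (fun _ => ν) S := fun S hS => by
    change μ ((fun a n => ω n a) ⁻¹' S) = _
    rw [← Measure.map_apply (by fun_prop) hS, iIndepFun.map_fun_eq_infinitePi_map hmeas hindep]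
    simp only [hlaw]
  rw [hlaw_seq _ measurableSet_eventuallyAlwaysHitting,
    hlaw_seq _ measurableSet_eventuallyAlwaysHitting, infinitePi_eventuallyAlwaysHitting_add]

lemma measure_eventuallyAlwaysHitting_eq_one [IsProbabilityMeasure μ] [ν.IsOpenPosMeasure]
    (hmeas : ∀ n, Measurable (ω n)) (hindep : iIndepFun ω μ) (hlaw : ∀ n, μ.map (ω n) = ν)
    {L : ℝ} (hL : 0 < L) (hr : ∀ N, L ≤ r N) :
    μ {a | (fun n => ω n a) ∈ eventuallyAlwaysHitting r y k} = 1 := by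
  set s : ℕ → Set Ω := fun n => ω n ⁻¹' Metric.ball y L
  have hs : ∀ n, MeasurableSet (s n) := fun n => hmeas n measurableSet_ball
  have hs_indep : iIndepSet s μ := (iIndepSet_iff_meas_biInter hs).2 fun S =>
    hindep.meas_biInter fun n _ => ⟨_, measurableSet_ball, rfl⟩
  have hs_sum : ∑' n, μ (s n) = ∞ := by
    simp only [s, ← Measure.map_apply (hmeas _) measurableSet_ball, hlaw]
    exact ENNReal.tsum_const_eq_top_of_ne_zero (Metric.measure_ball_pos ν y hL).ne'
  have hsub : limsup s atTop ⊆ {a | (fun n => ω n a) ∈ eventuallyAlwaysHitting r y k} :=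
    fun a ha => mem_eventuallyAlwaysHitting_of_frequently hr
      ((mem_limsup_iff_frequently_mem (s := s)).1 ha)
  exact prob_le_one.antisymm
    ((measure_limsup_eq_one hs hs_indep hs_sum).symm.trans_le (measure_mono hsub))

lemma measure_eventuallyAlwaysHitting_eq_zero_or_one_of_eventually_lt
    [SecondCountableTopology X] [NullSingletonClass ν]
    (hmeas : ∀ n, Measurable (ω n)) (hindep : iIndepFun ω μ) (hlaw : ∀ n, μ.map (ω n) = ν)
    (hr : ∀ ε > 0, ∀ᶠ N in atTop, r N < ε) :
    μ {a | (fun n => ω n a) ∈ eventuallyAlwaysHitting r y k} = 0 ∨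
      μ {a | (fun n => ω n a) ∈ eventuallyAlwaysHitting r y k} = 1 := by
  set A : ℕ → Set Ω := fun m => {a | (fun n => ω n a) ∈ eventuallyAlwaysHitting r y m}
  have hA : Antitone A := fun m m' h a ha => eventuallyAlwaysHitting_anti r y h ha
  have hne : ∀ᵐ a ∂μ, ∀ n, ω n a ≠ y := ae_all_iff.2 fun n =>
    ae_of_ae_map (hmeas n).aemeasurable (by rw [hlaw n]; exact Measure.ae_ne ν y)
  have hae : A k =ᵐ[μ] ⋂ m, A m := eventuallyEq_set.2 <| by
    filter_upwards [hne] with a ha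
    exact ⟨fun h => mem_iInter.2 fun m => mem_eventuallyAlwaysHitting_of_dist_pos hr
      (fun n _ => dist_pos.2 (ha n)) h, fun h => mem_iInter.1 h k⟩
  have htail : MeasurableSet[limsup (fun n => MeasurableSpace.comap (ω n) inferInstance) atTop]
      (⋂ m, A m) := by
    rw [limsup_eq_iInf_iSup_of_nat]
    refine MeasurableSpace.measurableSet_iInf.2 fun j => ?_
    rw [← hA.iInter_nat_add j]
    refine .iInter fun m => measurableSet_setOf_mem_eventuallyAlwaysHitting
      (fun n hn => Measurable.of_comap_le ?_) measurable_const
    exact le_iSup₂ (f := fun i (_ : i ≥ j) => MeasurableSpace.comap (ω i) inferInstance) n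
      (by omega)
  rw [measure_congr hae]
  exact measure_zero_or_one_of_measurableSet_limsup_atTop (fun n => (hmeas n).comap_le)
    hindep.iIndep htail

lemma measure_eventuallyAlwaysHitting_eq_zero_or_one [IsProbabilityMeasure μ]
    [SecondCountableTopology X] [NullSingletonClass ν] [ν.IsOpenPosMeasure]
    (hmeas : ∀ n, Measurable (ω n)) (hindep : iIndepFun ω μ) (hlaw : ∀ n, μ.map (ω n) = ν)
    (hr : Antitone r) :
    μ {a | (fun n => ω n a) ∈ eventuallyAlwaysHitting r y k} = 0 ∨
      μ {a | (fun n => ω n a) ∈ eventuallyAlwaysHitting r y k} = 1 := by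
  by_cases hpos : ∃ L > 0, ∀ N, L ≤ r N
  · obtain ⟨L, hL, hLr⟩ := hpos
    exact Or.inr (measure_eventuallyAlwaysHitting_eq_one hmeas hindep hlaw hL hLr)
  · push Not at hpos
    refine measure_eventuallyAlwaysHitting_eq_zero_or_one_of_eventually_lt hmeas hindep hlaw
      fun ε hε => ?_
    obtain ⟨N, hN⟩ := hpos ε hε
    exact eventually_atTop.2 ⟨N, fun M hM => (hr hM).trans_lt hN⟩

end IID

section Fubini

variable {α β : Type*} [MeasurableSpace α] [MeasurableSpace β] {μ : Measure α}

lemma lintegral_measure_prodMk_left_eq_of_forall [SFinite μ] {ν : Measure β}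
    [IsProbabilityMeasure ν] {W : Set (α × β)} (hW : MeasurableSet W) {c : ℝ≥0∞}
    (hc : ∀ y, μ ((fun x => (x, y)) ⁻¹' W) = c) :
    ∫⁻ x, ν (Prod.mk x ⁻¹' W) ∂μ = c := by
  rw [← Measure.prod_apply hW, Measure.prod_apply_symm hW]
  simp only [hc, lintegral_const, measure_univ, mul_one]

lemma ae_eq_one_or_ae_eq_zero_of_lintegral [IsProbabilityMeasure μ] {f : α → ℝ≥0∞}
    (hf : Measurable f) (hf_le : ∀ x, f x ≤ 1) (h : ∫⁻ x, f x ∂μ = 0 ∨ ∫⁻ x, f x ∂μ = 1) :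
    (∀ᵐ x ∂μ, f x = 1) ∨ ∀ᵐ x ∂μ, f x = 0 := by
  rcases h with h | h
  · exact Or.inr ((lintegral_eq_zero_iff hf).1 h)
  · refine Or.inl (ae_eq_of_ae_le_of_lintegral_le (ae_of_all _ hf_le) (by simp [h])
      aemeasurable_const (by simp [h]))

end Fubini

instance UnitAddCircle.nullSingletonClass_volume :
    NullSingletonClass (volume : Measure UnitAddCircle) :=
  ⟨fun y => by simp [← Metric.closedBall_zero, AddCircle.volume_closedBall]⟩

theorem stmt9_general {Ω : Type*} [MeasurableSpace Ω] (μ : Measure Ω) [IsProbabilityMeasure μ]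
    (ω : ℕ → Ω → UnitAddCircle) (hmeas : ∀ n, Measurable (ω n))
    (hindep : iIndepFun ω μ)
    (hunif : ∀ n, Measure.map (ω n) μ = volume)
    (r : ℕ → ℝ) (hrdec : Antitone r) :
    (∀ᵐ a ∂μ, volume {y : UnitAddCircle |
        ∀ᶠ N in atTop, ∃ n ∈ Finset.Icc 1 N, dist (ω n a) y < r N} = 1) ∨
    (∀ᵐ a ∂μ, volume {y : UnitAddCircle |
        ∀ᶠ N in atTop, ∃ n ∈ Finset.Icc 1 N, dist (ω n a) y < r N} = 0) := by
  set W : Set (Ω × UnitAddCircle) :=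
    {p | (fun n => ω n p.1) ∈ eventuallyAlwaysHitting r p.2 1}
  have hW : MeasurableSet W := measurableSet_setOf_mem_eventuallyAlwaysHitting
    (fun n _ => (hmeas n).comp measurable_fst) measurable_snd
  have hsection : ∀ y, μ ((fun a => (a, y)) ⁻¹' W)
      = μ {a | (fun n => ω n a) ∈ eventuallyAlwaysHitting r 0 1} := fun y => by
    have := measure_eventuallyAlwaysHitting_add (r := r) (k := 1) hmeas hindep hunif 0 y
    rwa [zero_add] at this
  refine ae_eq_one_or_ae_eq_zero_of_lintegral (f := fun a => volume (Prod.mk a ⁻¹' W))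
    (measurable_measure_prodMk_left hW) (fun _ => prob_le_one) ?_
  rw [lintegral_measure_prodMk_left_eq_of_forall hW hsection]
  exact measure_eventuallyAlwaysHitting_eq_zero_or_one hmeas hindep hunif hrdec

/-- Zero--one law for the Lebesgue measure of the uniform covering set: either almost surely
`λ(U(ω)) = 1` or almost surely `λ(U(ω)) = 0`. -/
theorem stmt9 {Ω : Type*} [MeasurableSpace Ω] (μ : Measure Ω) [IsProbabilityMeasure μ]
    (ω : ℕ → Ω → UnitAddCircle) (hmeas : ∀ n, Measurable (ω n))
    (hindep : iIndepFun ω μ)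
    (hunif : ∀ n, Measure.map (ω n) μ = volume)
    (r : ℕ → ℝ) (hrpos : ∀ n, 1 ≤ n → 0 < r n) (hrdec : Antitone r) :
    (∀ᵐ a ∂μ, volume {y : UnitAddCircle |
        ∀ᶠ N in atTop, ∃ n ∈ Finset.Icc 1 N, dist (ω n a) y < r N} = 1) ∨
    (∀ᵐ a ∂μ, volume {y : UnitAddCircle |
        ∀ᶠ N in atTop, ∃ n ∈ Finset.Icc 1 N, dist (ω n a) y < r N} = 0) :=
  stmt9_general μ ω hmeas hindep hunif r hrdec
end

section
/- Let (ω_n) be i.i.d. uniform on T with ∑_{n≥1} n r_n < ∞ for a sequence of positive radii (r_n). Then almost surely U(ω) = {ω_k : k ∈ N}, i.e. the uniform covering set is countable and consists exactly of the points of the sequence. -/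
open MeasureTheory ProbabilityTheory Filter Set
open scoped ENNReal Topology

attribute [local instance] ZeroLEOneClass.factZeroLtOne

/-!
Two independent uniform points of the circle are `ε`-close with probability at most `2ε`,
so some two of the first `N + 1` points are `ε`-close with probability at most `2(N + 1)²ε`.
Since `r` need not be monotone, look only at times `t j ∈ [2 ^ j, 2 ^ (j + 1))` where `r` is
minimal on its dyadic block: then `4 ^ j r (t j)` is bounded by the block sum of `n r n`, and
Borel–Cantelli shows that almost surely, for all large `j`, the first `t (j + 1) + 1` points are
pairwise at distance at least `r (t j) + r (t (j + 1))`. For a point `y` of the covering set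
the balls of radius `r (t j)` and `r (t (j + 1))` containing `y` must then have the same centre
`ω k`, and `dist (ω k) y < r (t j) → 0` forces `y = ω k`.
-/

section PairDistance

variable {Ω : Type*} [MeasurableSpace Ω] {μ : Measure Ω} [IsProbabilityMeasure μ]
  {T : ℝ} [Fact (0 < T)]

theorem measure_dist_lt_le_of_indepFun {X Y : Ω → AddCircle T} (hX : Measurable X)
    (hY : Measurable Y) (hXY : IndepFun X Y μ) (hY_unif : μ.map Y = volume) (ε : ℝ) :
    μ {a | dist (X a) (Y a) < ε} ≤ ENNReal.ofReal (2 * ε) := by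
  have : IsProbabilityMeasure (μ.map X) := Measure.isProbabilityMeasure_map hX.aemeasurable
  set S := {p : AddCircle T × AddCircle T | dist p.1 p.2 < ε}
  have hS : MeasurableSet S :=
    measurableSet_lt (measurable_fst.dist measurable_snd) measurable_const
  have hlaw : μ.map (fun a => (X a, Y a)) = (μ.map X).prod volume := by
    rw [(indepFun_iff_map_prod_eq_prod_map_map hX.aemeasurable hY.aemeasurable).mp hXY, hY_unif]
  have hslice (x : AddCircle T) : volume (Prod.mk x ⁻¹' S) ≤ ENNReal.ofReal (2 * ε) :=
    calc volume (Prod.mk x ⁻¹' S)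
        ≤ volume (Metric.closedBall x ε) :=
          measure_mono fun _ hy => Metric.mem_closedBall'.mpr (le_of_lt hy)
      _ ≤ ENNReal.ofReal (2 * ε) := by
          rw [AddCircle.volume_closedBall]
          exact ENNReal.ofReal_le_ofReal (min_le_right _ _)
  calc μ {a | dist (X a) (Y a) < ε}
      = (μ.map X).prod volume S := by
        rw [← hlaw, Measure.map_apply (hX.prodMk hY) hS]
        rfl
    _ = ∫⁻ x, volume (Prod.mk x ⁻¹' S) ∂μ.map X := Measure.prod_apply hS
    _ ≤ ∫⁻ _, ENNReal.ofReal (2 * ε) ∂μ.map X := lintegral_mono hslice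
    _ = ENNReal.ofReal (2 * ε) := by simp

theorem measure_exists_ne_dist_lt_le {ω : ℕ → Ω → AddCircle T}
    (hmeas : ∀ n, Measurable (ω n)) (hindep : Pairwise fun n m => IndepFun (ω n) (ω m) μ)
    (hunif : ∀ n, μ.map (ω n) = volume) (N : ℕ) (ε : ℝ) :
    μ {a | ∃ n ≤ N, ∃ m ≤ N, n ≠ m ∧ dist (ω n a) (ω m a) < ε}
      ≤ ENNReal.ofReal ((N + 1) ^ 2 * (2 * ε)) := by
  set P := (Finset.range (N + 1) ×ˢ Finset.range (N + 1)).filter fun p : ℕ × ℕ => p.1 ≠ p.2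
  have hcover : {a | ∃ n ≤ N, ∃ m ≤ N, n ≠ m ∧ dist (ω n a) (ω m a) < ε}
      ⊆ ⋃ p ∈ P, {a | dist (ω p.1 a) (ω p.2 a) < ε} := by
    rintro a ⟨n, hn, m, hm, hnm, hd⟩
    exact mem_biUnion (x := (n, m)) (by simp [P, hn, hm, hnm]) hd
  calc μ {a | ∃ n ≤ N, ∃ m ≤ N, n ≠ m ∧ dist (ω n a) (ω m a) < ε}
      ≤ ∑ p ∈ P, μ {a | dist (ω p.1 a) (ω p.2 a) < ε} :=
        (measure_mono hcover).trans (measure_biUnion_finset_le _ _)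
    _ ≤ ∑ _p ∈ P, ENNReal.ofReal (2 * ε) := Finset.sum_le_sum fun _ hp =>
        measure_dist_lt_le_of_indepFun (hmeas _) (hmeas _) (hindep (Finset.mem_filter.mp hp).2)
          (hunif _) ε
    _ ≤ ∑ _p ∈ Finset.range (N + 1) ×ˢ Finset.range (N + 1), ENNReal.ofReal (2 * ε) :=
        Finset.sum_le_sum_of_subset (Finset.filter_subset _ _)
    _ = ENNReal.ofReal ((N + 1) ^ 2 * (2 * ε)) := by
        rw [Finset.sum_const, Finset.card_product, Finset.card_range, nsmul_eq_mul,
          show ((N : ℝ) + 1) ^ 2 = ((N + 1) * (N + 1) : ℕ) by push_cast; ring,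
          ENNReal.ofReal_mul (Nat.cast_nonneg _), ENNReal.ofReal_natCast]

end PairDistance

section DyadicBlocks

theorem sum_range_sum_Ico_two_pow {M : Type*} [AddCommMonoid M] (f : ℕ → M) (J : ℕ) :
    ∑ j ∈ Finset.range J, ∑ n ∈ Finset.Ico (2 ^ j) (2 ^ (j + 1)), f n
      = ∑ n ∈ Finset.Ico 1 (2 ^ J), f n := by
  induction J with
  | zero => simp
  | succ J ih =>
    rw [Finset.sum_range_succ, ih]
    exact Finset.sum_Ico_consecutive _ Nat.one_le_two_pow (Nat.pow_le_pow_right two_pos J.le_succ)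

theorem summable_sum_Ico_two_pow {f : ℕ → ℝ} (hf : 0 ≤ f) (hsum : Summable f) :
    Summable fun j => ∑ n ∈ Finset.Ico (2 ^ j) (2 ^ (j + 1)), f n := by
  refine summable_of_sum_range_le (c := ∑' n, f n) (fun j => Finset.sum_nonneg fun n _ => hf n)
    fun J => ?_
  rw [sum_range_sum_Ico_two_pow]
  exact hsum.sum_le_tsum _ fun n _ => hf n

variable {r : ℕ → ℝ}

theorem exists_mem_Ico_two_pow_four_pow_mul_le (hr : ∀ n, 1 ≤ n → 0 ≤ r n) (j : ℕ) :
    ∃ t ∈ Finset.Ico (2 ^ j) (2 ^ (j + 1)),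
      (4 : ℝ) ^ j * r t ≤ ∑ n ∈ Finset.Ico (2 ^ j) (2 ^ (j + 1)), n * r n := by
  obtain ⟨t, ht, hmin⟩ := Finset.exists_min_image (Finset.Ico (2 ^ j) (2 ^ (j + 1))) r
    ⟨2 ^ j, by simp [pow_succ]⟩
  refine ⟨t, ht, ?_⟩
  have hrt : 0 ≤ r t := hr t (Nat.one_le_two_pow.trans (Finset.mem_Ico.mp ht).1)
  have hcard : (Finset.Ico (2 ^ j) (2 ^ (j + 1))).card = 2 ^ j := by
    rw [Nat.card_Ico, pow_succ]
    omega
  calc (4 : ℝ) ^ j * r t = ∑ _n ∈ Finset.Ico (2 ^ j) (2 ^ (j + 1)), (2 : ℝ) ^ j * r t := by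
        rw [Finset.sum_const, hcard, nsmul_eq_mul, show (4 : ℝ) = 2 * 2 by norm_num, mul_pow]
        push_cast
        ring
    _ ≤ ∑ n ∈ Finset.Ico (2 ^ j) (2 ^ (j + 1)), n * r n := Finset.sum_le_sum fun n hn =>
        mul_le_mul (by exact_mod_cast (Finset.mem_Ico.mp hn).1) (hmin n hn) hrt (Nat.cast_nonneg n)

theorem exists_strictMono_summable_sq_mul (hr : ∀ n, 1 ≤ n → 0 ≤ r n)
    (hsum : Summable fun n : ℕ => n * r n) :
    ∃ t : ℕ → ℕ, StrictMono t ∧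
      Summable fun j => ((t (j + 1) : ℝ) + 1) ^ 2 * (2 * (r (t j) + r (t (j + 1)))) := by
  set b : ℕ → ℝ := fun j => ∑ n ∈ Finset.Ico (2 ^ j) (2 ^ (j + 1)), n * r n
  choose t ht hb using exists_mem_Ico_two_pow_four_pow_mul_le hr
  have hlow (j : ℕ) : 2 ^ j ≤ t j := (Finset.mem_Ico.mp (ht j)).1
  have hup (j : ℕ) : t j < 2 ^ (j + 1) := (Finset.mem_Ico.mp (ht j)).2
  have hrt (j : ℕ) : 0 ≤ r (t j) := hr _ (Nat.one_le_two_pow.trans (hlow j))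
  have hb_summable : Summable b :=
    summable_sum_Ico_two_pow (fun n => by
      rcases n.eq_zero_or_pos with rfl | hn
      · simp
      · exact mul_nonneg n.cast_nonneg (hr n hn)) hsum
  refine ⟨t, strictMono_nat_of_lt_succ fun j => (hup j).trans_le (hlow (j + 1)), ?_⟩
  refine .of_nonneg_of_le (fun j => by have := hrt j; have := hrt (j + 1); positivity)
    (fun j => ?_) ((hb_summable.mul_left 32).add ((hb_summable.comp_injective
      (add_left_injective 1)).mul_left 8))
  have hsq : ((t (j + 1) : ℝ) + 1) ^ 2 ≤ 16 * 4 ^ j := by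
    have : t (j + 1) + 1 ≤ 4 * 2 ^ j := by
      have := hup (j + 1)
      rw [pow_succ, pow_succ] at this
      omega
    calc ((t (j + 1) : ℝ) + 1) ^ 2 ≤ (4 * 2 ^ j) ^ 2 := by
          gcongr
          exact_mod_cast this
      _ = 16 * 4 ^ j := by rw [mul_pow, ← pow_mul, mul_comm j, pow_mul]; norm_num
  calc ((t (j + 1) : ℝ) + 1) ^ 2 * (2 * (r (t j) + r (t (j + 1))))
      ≤ 16 * 4 ^ j * (2 * (r (t j) + r (t (j + 1)))) := by
        have := hrt j; have := hrt (j + 1)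
        gcongr
    _ = 32 * (4 ^ j * r (t j)) + 8 * (4 ^ (j + 1) * r (t (j + 1))) := by ring
    _ ≤ 32 * b j + 8 * b (j + 1) := by
        have := hb j; have := hb (j + 1)
        gcongr

end DyadicBlocks

theorem tendsto_zero_of_summable_natCast_mul {r : ℕ → ℝ}
    (hsum : Summable fun n : ℕ => n * r n) :
    Tendsto r atTop (𝓝 0) := by
  have := hsum.tendsto_atTop_zero.mul tendsto_one_div_atTop_nhds_zero_nat
  rw [zero_mul] at this
  refine this.congr' ?_
  filter_upwards [eventually_ne_atTop 0] with n hn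
  field_simp

section Covering

variable {X : Type*} [MetricSpace X] {x : ℕ → X} {r : ℕ → ℝ} {t : ℕ → ℕ}

theorem exists_eq_of_eventually_exists_dist_lt (ht : Monotone t)
    (hr : Tendsto (fun j => r (t j)) atTop (𝓝 0))
    (hsep : ∀ᶠ j in atTop, ∀ n ≤ t (j + 1), ∀ m ≤ t (j + 1), n ≠ m →
      r (t j) + r (t (j + 1)) ≤ dist (x n) (x m))
    {y : X} (hy : ∀ᶠ j in atTop, ∃ n ∈ Finset.Icc 1 (t j), dist (x n) y < r (t j)) :
    ∃ k, 1 ≤ k ∧ x k = y := by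
  obtain ⟨j₀, hj₀⟩ := eventually_atTop.mp (hsep.and hy)
  obtain ⟨k, hk, hky⟩ := (hj₀ j₀ le_rfl).2
  have hclose (j : ℕ) (hj : j₀ ≤ j) : dist (x k) y < r (t j) := by
    induction j, hj using Nat.le_induction with
    | base => exact hky
    | succ j hj ih =>
      obtain ⟨n, hn, hny⟩ := (hj₀ (j + 1) (by omega)).2
      obtain rfl : n = k := by
        by_contra hnk
        have hfar := (hj₀ j hj).1 n (Finset.mem_Icc.mp hn).2 k
          ((Finset.mem_Icc.mp hk).2.trans (ht (by omega))) hnk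
        linarith [dist_triangle_right (x n) (x k) y]
      exact hny
  refine ⟨k, (Finset.mem_Icc.mp hk).1, dist_le_zero.mp (ge_of_tendsto hr ?_)⟩
  filter_upwards [eventually_ge_atTop j₀] with j hj
  exact (hclose j hj).le

theorem setOf_eventually_exists_dist_lt_eq (hrpos : ∀ n, 1 ≤ n → 0 < r n)
    (hr : Tendsto r atTop (𝓝 0)) (ht : StrictMono t)
    (hsep : ∀ᶠ j in atTop, ∀ n ≤ t (j + 1), ∀ m ≤ t (j + 1), n ≠ m →
      r (t j) + r (t (j + 1)) ≤ dist (x n) (x m)) :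
    {y | ∀ᶠ N in atTop, ∃ n ∈ Finset.Icc 1 N, dist (x n) y < r N}
      = {y | ∃ k, 1 ≤ k ∧ x k = y} := by
  ext y
  constructor
  · intro hy
    exact exists_eq_of_eventually_exists_dist_lt ht.monotone (hr.comp ht.tendsto_atTop) hsep
      (ht.tendsto_atTop.eventually hy)
  · rintro ⟨k, hk, rfl⟩
    filter_upwards [eventually_ge_atTop k] with N hN
    exact ⟨k, Finset.mem_Icc.mpr ⟨hk, hN⟩, by simpa using hrpos N (hk.trans hN)⟩

end Covering

/-- If `∑ n r_n < ∞`, then almost surely the uniform covering set equals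
exactly the set of points of the sequence. -/
theorem stmt10 {Ω : Type*} [MeasurableSpace Ω] (μ : Measure Ω) [IsProbabilityMeasure μ]
    (ω : ℕ → Ω → UnitAddCircle) (hmeas : ∀ n, Measurable (ω n))
    (hindep : iIndepFun ω μ)
    (hunif : ∀ n, Measure.map (ω n) μ = volume)
    (r : ℕ → ℝ) (hrpos : ∀ n, 1 ≤ n → 0 < r n)
    (hsum : Summable (fun n : ℕ => (n : ℝ) * r n)) :
    ∀ᵐ a ∂μ,
      {y : UnitAddCircle | ∀ᶠ N in atTop, ∃ n ∈ Finset.Icc 1 N, dist (ω n a) y < r N}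
        = {y : UnitAddCircle | ∃ k : ℕ, 1 ≤ k ∧ ω k a = y} := by
  obtain ⟨t, ht, hc⟩ := exists_strictMono_summable_sq_mul (fun n hn => (hrpos n hn).le) hsum
  set close : ℕ → Set Ω := fun j => {a | ∃ n ≤ t (j + 1), ∃ m ≤ t (j + 1), n ≠ m ∧
    dist (ω n a) (ω m a) < r (t j) + r (t (j + 1))}
  have hclose_sum : ∑' j, μ (close j) ≠ ∞ := by
    refine ne_top_of_le_ne_top (ENNReal.tsum_coe_ne_top_iff_summable.mpr hc.toNNReal)
      (ENNReal.tsum_le_tsum fun j => ?_)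
    exact measure_exists_ne_dist_lt_le hmeas (fun _ _ hnm => hindep.indepFun hnm) hunif _ _
  filter_upwards [ae_eventually_notMem hclose_sum] with a ha
  refine setOf_eventually_exists_dist_lt_eq hrpos (tendsto_zero_of_summable_natCast_mul hsum) ht ?_
  filter_upwards [ha] with j hj
  simpa [close] using hj
end

section
/- With the notation above (i.i.d. uniform (ω_k), F_j = ∪_{k=n_{j−1}+1}^{n_j} B(ω_k, r_{n_{j+1}}), μ_{l,m} the restriction of Lebesgue measure to ∩_{j=l}^m F_j, K_{l,m} = ∏_{j=l}^m (1 − (1−2r_{n_{j+1}})^{n_j−n_{j−1}})), one has E[μ_{l,m}(T)²] ≤ K_{l,m}² ∫_T ∫_T Ψ_{l,m}(‖x−y‖) dx dy, where Ψ_{l,m}(t) = ∏_{j=l}^m (1 + ((1−2r_{n_{j+1}})^{n_j−n_{j−1}}/(1−(1−2r_{n_{j+1}})^{n_j−n_{j−1}})) · 1_{t < 2r_{n_{j+1}}}). -/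
open MeasureTheory ProbabilityTheory Filter Set
open scoped ENNReal Topology


/-!
By Tonelli, `E[λ(E)²] = ∬ P(x ∈ E, y ∈ E) dx dy` for the random set
`E = ⋂_{j=l}^m F_j`, and since the blocks of indices defining the `F_j` are disjoint,
`P(x ∈ E, y ∈ E)` factors over `j`. For a block of `N` uniform points and radius `r`, the
probability that neither `x` nor `y` is hit is at most `1 - 2r` when `‖x - y‖ < 2r` and
`1 - 4r ≤ (1 - 2r)²` otherwise, so with `q = (1 - 2r)^N` inclusion–exclusion gives
`P(both hit) = 1 - 2q + P(neither hit) ≤ (1 - q)² (1 + q / (1 - q) · 1_{‖x - y‖ < 2r})`.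
-/

namespace UnitAddCircle

lemma measureReal_ball (x : UnitAddCircle) {r : ℝ} (h0 : 0 ≤ r) (h2 : r ≤ 1 / 2) :
    volume.real (Metric.ball x r) = 2 * r := by
  rw [measureReal_def, ← measure_congr AddCircle.closedBall_ae_eq_ball,
    AddCircle.volume_closedBall, min_eq_right (by linarith), ENNReal.toReal_ofReal (by linarith)]

lemma measureReal_compl_ball (x : UnitAddCircle) {r : ℝ} (h0 : 0 ≤ r) (h2 : r ≤ 1 / 2) :
    volume.real (Metric.ball x r)ᶜ = 1 - 2 * r := by
  rw [probReal_compl_eq_one_sub Metric.isOpen_ball.measurableSet, measureReal_ball x h0 h2]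

lemma measureReal_compl_ball_inter_compl_ball_le (x y : UnitAddCircle) {r : ℝ} (h0 : 0 ≤ r)
    (h2 : r ≤ 1 / 2) :
    volume.real ((Metric.ball x r)ᶜ ∩ (Metric.ball y r)ᶜ) ≤
      if dist x y < 2 * r then 1 - 2 * r else (1 - 2 * r) ^ 2 := by
  split_ifs with hxy
  · rw [← measureReal_compl_ball x h0 h2]
    exact measureReal_mono inter_subset_left
  · have hdisj : Disjoint (Metric.ball x r) (Metric.ball y r) :=
      Metric.ball_disjoint_ball (by linarith)
    rw [← compl_union, probReal_compl_eq_one_sub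
        (Metric.isOpen_ball.measurableSet.union Metric.isOpen_ball.measurableSet),
      measureReal_union hdisj Metric.isOpen_ball.measurableSet, measureReal_ball x h0 h2,
      measureReal_ball y h0 h2]
    nlinarith

end UnitAddCircle

lemma measurableSet_biUnion_preimage_iSup_comap {Ω κ β : Type*} [mβ : MeasurableSpace β]
    (f : κ → Ω → β)
    (t : Finset κ) {C : Set β} (hC : MeasurableSet C) :
    MeasurableSet[⨆ k ∈ (t : Set κ), mβ.comap (f k)] (⋃ k ∈ t, f k ⁻¹' C) :=
  Finset.measurableSet_biUnion _ fun k hk =>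
    le_iSup₂ (f := fun k (_ : k ∈ (t : Set κ)) => mβ.comap (f k)) k hk _ ⟨C, hC, rfl⟩

namespace ProbabilityTheory

variable {Ω ι κ β : Type*} {mΩ : MeasurableSpace Ω} {μ : Measure Ω}

theorem iIndep.measure_biInter_eq_prod_of_pairwiseDisjoint [IsProbabilityMeasure μ]
    {m : κ → MeasurableSpace Ω}
    (hle : ∀ k, m k ≤ mΩ) (hind : iIndep m μ) {S : Finset ι} {T : ι → Set κ}
    (hT : (S : Set ι).PairwiseDisjoint T) {s : ι → Set Ω}
    (hs : ∀ i ∈ S, MeasurableSet[⨆ k ∈ T i, m k] (s i)) :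
    μ (⋂ i ∈ S, s i) = ∏ i ∈ S, μ (s i) := by
  classical
  induction S using Finset.induction_on with
  | empty => simp
  | @insert a S ha ih =>
    rw [Finset.set_biInter_insert, Finset.prod_insert ha,
      ← ih (hT.subset (by simp)) fun i hi => hs i (Finset.mem_insert_of_mem hi)]
    have hdisj : Disjoint (T a) (⋃ i ∈ S, T i) :=
      disjoint_iUnion₂_right.mpr fun i hi =>
        hT (by simp) (by simp [hi]) (by rintro rfl; exact ha hi)
    have hrest : MeasurableSet[⨆ k ∈ ⋃ i ∈ S, T i, m k] (⋂ i ∈ S, s i) :=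
      Finset.measurableSet_biInter _ fun i hi =>
        (biSup_mono fun k hk => mem_biUnion hi hk : ⨆ k ∈ T i, m k ≤ ⨆ k ∈ ⋃ i ∈ S, T i, m k) _
          (hs i (Finset.mem_insert_of_mem hi))
    exact ((indep_iSup_of_disjoint hle hind hdisj).indepSet_of_measurableSet
      (hs a (Finset.mem_insert_self a S)) hrest).measure_inter_eq_mul

lemma iIndepFun.measure_biInter_preimage_eq_pow_s14 [MeasurableSpace β] {ν : Measure β}
    {f : κ → Ω → β} (hf : ∀ k, Measurable (f k)) (hind : iIndepFun f μ)
    (hν : ∀ k, μ.map (f k) = ν) (t : Finset κ) {C : Set β} (hC : MeasurableSet C) :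
    μ (⋂ k ∈ t, f k ⁻¹' C) = ν C ^ t.card := by
  rw [hind.measure_inter_preimage_eq_mul t (sets := fun _ => C) fun _ _ => hC, ← Finset.prod_const]
  exact Finset.prod_congr rfl fun k _ => by rw [← hν k, Measure.map_apply (hf k) hC]

end ProbabilityTheory

lemma measureReal_inter_eq_one_sub_add {Ω : Type*} [MeasurableSpace Ω] {μ : Measure Ω}
    [IsProbabilityMeasure μ] {A B : Set Ω}
    (hA : MeasurableSet A) (hB : MeasurableSet B) :
    μ.real (A ∩ B) = 1 - μ.real Aᶜ - μ.real Bᶜ + μ.real (Aᶜ ∩ Bᶜ) := by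
  have := measureReal_union_add_inter (μ := μ) (s := Aᶜ) hB.compl
  rw [← compl_inter, probReal_compl_eq_one_sub (hA.inter hB)] at this
  linarith

lemma one_sub_two_mul_add_le {q w : ℝ} (hq : q < 1) (near : Prop) [Decidable near]
    (hw : w ≤ if near then q else q ^ 2) :
    1 - 2 * q + w ≤ (1 - q) ^ 2 * (1 + q / (1 - q) * if near then 1 else 0) := by
  have h1q : 1 - q ≠ 0 := by linarith
  split_ifs at hw ⊢
  · have : (1 - q) ^ 2 * (1 + q / (1 - q) * 1) = 1 - q := by field_simp; ring
    linarith
  · nlinarith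

theorem lintegral_measure_sq_eq_lintegral_lintegral {Ω X : Type*} [MeasurableSpace Ω]
    [MeasurableSpace X] {μ : Measure Ω} {ν : Measure X} [SFinite μ] [SFinite ν]
    {E : Ω → Set X} (hE : MeasurableSet {p : Ω × X | p.2 ∈ E p.1}) :
    ∫⁻ a, ν (E a) ^ 2 ∂μ = ∫⁻ x, ∫⁻ y, μ {a | x ∈ E a ∧ y ∈ E a} ∂ν ∂ν := by
  set M : Set (Ω × X × X) := {p | p.2.1 ∈ E p.1 ∧ p.2.2 ∈ E p.1}
  have hM : MeasurableSet M :=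
    (measurable_fst.prodMk measurable_snd.fst hE).inter
      (measurable_fst.prodMk measurable_snd.snd hE)
  calc ∫⁻ a, ν (E a) ^ 2 ∂μ = ∫⁻ a, ν.prod ν (Prod.mk a ⁻¹' M) ∂μ := by
        refine lintegral_congr fun a => ?_
        rw [show Prod.mk a ⁻¹' M = E a ×ˢ E a from rfl, Measure.prod_prod, sq]
    _ = μ.prod (ν.prod ν) M := (Measure.prod_apply hM).symm
    _ = ∫⁻ z, μ ((·, z) ⁻¹' M) ∂ν.prod ν := Measure.prod_apply_symm hM
    _ = ∫⁻ x, ∫⁻ y, μ {a | x ∈ E a ∧ y ∈ E a} ∂ν ∂ν :=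
        lintegral_prod _ (measurable_measure_prodMk_right hM).aemeasurable

section RandomBalls

variable {Ω ι κ X : Type*} [PseudoMetricSpace X]

def hits (ω : κ → Ω → X) (t : Finset κ) (r : ℝ) (z : X) : Set Ω :=
  ⋃ k ∈ t, ω k ⁻¹' Metric.ball z r

lemma setOf_mem_inter_mem_biInter_biUnion_ball (ω : κ → Ω → X) (S : Finset ι)
    (T : ι → Finset κ) (ρ : ι → ℝ) (x y : X) :
    {a | x ∈ ⋂ j ∈ S, ⋃ k ∈ T j, Metric.ball (ω k a) (ρ j) ∧
        y ∈ ⋂ j ∈ S, ⋃ k ∈ T j, Metric.ball (ω k a) (ρ j)} =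
      ⋂ j ∈ S, hits ω (T j) (ρ j) x ∩ hits ω (T j) (ρ j) y := by
  ext
  simp only [hits, mem_ofPred_eq, mem_iInter, mem_iUnion, mem_inter_iff, mem_preimage,
    Metric.mem_ball, dist_comm x, dist_comm y, forall_and]

lemma measurableSet_setOf_mem_biInter_biUnion_ball [MeasurableSpace Ω] [MeasurableSpace X]
    [OpensMeasurableSpace X] [SecondCountableTopology X] {ω : κ → Ω → X}
    (hmeas : ∀ k, Measurable (ω k)) (S : Finset ι) (T : ι → Finset κ) (ρ : ι → ℝ) :
    MeasurableSet {p : Ω × X | p.2 ∈ ⋂ j ∈ S, ⋃ k ∈ T j, Metric.ball (ω k p.1) (ρ j)} := by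
  have : {p : Ω × X | p.2 ∈ ⋂ j ∈ S, ⋃ k ∈ T j, Metric.ball (ω k p.1) (ρ j)} =
      ⋂ j ∈ S, ⋃ k ∈ T j, {p | dist p.2 (ω k p.1) < ρ j} := by
    ext; simp [Metric.mem_ball]
  rw [this]
  exact S.measurableSet_biInter fun j _ => (T j).measurableSet_biUnion fun k _ =>
    measurableSet_lt (measurable_snd.dist ((hmeas k).comp measurable_fst)) measurable_const

end RandomBalls

section UniformBalls

variable {Ω ι κ : Type*} [MeasurableSpace Ω] {μ : Measure Ω} [IsProbabilityMeasure μ]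
  {ω : κ → Ω → UnitAddCircle}

lemma measure_hits_inter_hits_le (hmeas : ∀ k, Measurable (ω k)) (hindep : iIndepFun ω μ)
    (hunif : ∀ k, μ.map (ω k) = volume) {r : ℝ} (h0 : 0 < r) (h2 : r ≤ 1 / 2)
    {t : Finset κ} (ht : t.Nonempty) (x y : UnitAddCircle) :
    μ (hits ω t r x ∩ hits ω t r y) ≤
      ENNReal.ofReal (1 - (1 - 2 * r) ^ t.card) ^ 2 *
        ENNReal.ofReal (1 + (1 - 2 * r) ^ t.card / (1 - (1 - 2 * r) ^ t.card) *
          if dist x y < 2 * r then 1 else 0) := by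
  set q := (1 - 2 * r) ^ t.card
  have hq : q < 1 := pow_lt_one₀ (by linarith) (by linarith) (Finset.card_ne_zero.mpr ht)
  have hball (z : UnitAddCircle) : MeasurableSet (Metric.ball z r) :=
    Metric.isOpen_ball.measurableSet
  have hhits (z : UnitAddCircle) : MeasurableSet (hits ω t r z) :=
    t.measurableSet_biUnion fun k _ => hmeas k (hball z)
  have hmiss {C : Set UnitAddCircle} (hC : MeasurableSet C) :
      μ.real (⋂ k ∈ t, ω k ⁻¹' C) = volume.real C ^ t.card := by
    rw [measureReal_def, hindep.measure_biInter_preimage_eq_pow_s14 hmeas hunif t hC,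
      ENNReal.toReal_pow, measureReal_def]
  have hcompl (z : UnitAddCircle) : (hits ω t r z)ᶜ = ⋂ k ∈ t, ω k ⁻¹' (Metric.ball z r)ᶜ := by
    simp only [hits, compl_iUnion, preimage_compl]
  have hneither : (hits ω t r x)ᶜ ∩ (hits ω t r y)ᶜ =
      ⋂ k ∈ t, ω k ⁻¹' ((Metric.ball x r)ᶜ ∩ (Metric.ball y r)ᶜ) := by
    ext; simp only [hcompl, mem_inter_iff, mem_iInter, preimage_inter, forall_and]
  have hw : volume.real ((Metric.ball x r)ᶜ ∩ (Metric.ball y r)ᶜ) ^ t.card ≤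
      if dist x y < 2 * r then q else q ^ 2 := by
    refine (pow_le_pow_left₀ measureReal_nonneg
      (UnitAddCircle.measureReal_compl_ball_inter_compl_ball_le x y h0.le h2) _).trans ?_
    split_ifs
    exacts [le_rfl, (pow_right_comm _ _ _).le]
  have key : μ.real (hits ω t r x ∩ hits ω t r y) ≤
      (1 - q) ^ 2 * (1 + q / (1 - q) * if dist x y < 2 * r then 1 else 0) := by
    rw [measureReal_inter_eq_one_sub_add (hhits x) (hhits y), hneither, hcompl, hcompl,
      hmiss (hball x).compl, hmiss (hball y).compl, hmiss ((hball x).compl.inter (hball y).compl),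
      UnitAddCircle.measureReal_compl_ball x h0.le h2,
      UnitAddCircle.measureReal_compl_ball y h0.le h2]
    linarith [one_sub_two_mul_add_le hq _ hw]
  rw [← ofReal_measureReal, ← ENNReal.ofReal_pow (by linarith),
    ← ENNReal.ofReal_mul (by positivity)]
  exact ENNReal.ofReal_le_ofReal key

lemma measure_mem_inter_mem_biInter_biUnion_ball_le (hmeas : ∀ k, Measurable (ω k))
    (hindep : iIndepFun ω μ) (hunif : ∀ k, μ.map (ω k) = volume) {S : Finset ι}
    {T : ι → Finset κ} (hT : (S : Set ι).PairwiseDisjoint fun j => (T j : Set κ))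
    (hne : ∀ j ∈ S, (T j).Nonempty) {ρ : ι → ℝ} (h0 : ∀ j, 0 < ρ j) (h2 : ∀ j, ρ j ≤ 1 / 2)
    (x y : UnitAddCircle) :
    μ {a | x ∈ ⋂ j ∈ S, ⋃ k ∈ T j, Metric.ball (ω k a) (ρ j) ∧
        y ∈ ⋂ j ∈ S, ⋃ k ∈ T j, Metric.ball (ω k a) (ρ j)} ≤
      (∏ j ∈ S, ENNReal.ofReal (1 - (1 - 2 * ρ j) ^ (T j).card)) ^ 2 *
        ∏ j ∈ S, ENNReal.ofReal (1 + (1 - 2 * ρ j) ^ (T j).card /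
          (1 - (1 - 2 * ρ j) ^ (T j).card) * if dist x y < 2 * ρ j then 1 else 0) := by
  have hhits (j : ι) (z : UnitAddCircle) : MeasurableSet[⨆ k ∈ (T j : Set κ),
      MeasurableSpace.comap (ω k) inferInstance] (hits ω (T j) (ρ j) z) :=
    measurableSet_biUnion_preimage_iSup_comap ω _ Metric.isOpen_ball.measurableSet
  rw [setOf_mem_inter_mem_biInter_biUnion_ball,
    hindep.iIndep.measure_biInter_eq_prod_of_pairwiseDisjoint (fun k => (hmeas k).comap_le) hT
      fun j _ => (hhits j x).inter (hhits j y),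
    ← Finset.prod_pow, ← Finset.prod_mul_distrib]
  exact Finset.prod_le_prod' fun j hj =>
    measure_hits_inter_hits_le hmeas hindep hunif (h0 j) (h2 j) (hne j hj) x y

end UniformBalls

theorem stmt14_general {Ω : Type*} [MeasurableSpace Ω] (μ : Measure Ω) [IsProbabilityMeasure μ]
    (ω : ℕ → Ω → UnitAddCircle) (hmeas : ∀ k, Measurable (ω k))
    (hindep : iIndepFun ω μ)
    (hunif : ∀ k, Measure.map (ω k) μ = volume)
    (r : ℕ → ℝ) (hr0 : ∀ k, 0 < r k) (hr2 : ∀ k, r k < 1/2)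
    (n : ℕ → ℕ) (hn : StrictMono n)
    (l m : ℕ) (hl : 1 ≤ l)
    (q : ℕ → ℝ) (hq : ∀ j, q j = (1 - 2 * r (n (j + 1))) ^ (n j - n (j - 1))) :
    ∫⁻ a, (volume (⋂ j ∈ Finset.Icc l m,
        ⋃ k ∈ Finset.Ioc (n (j - 1)) (n j), Metric.ball (ω k a) (r (n (j + 1))))) ^ 2 ∂μ
      ≤ (∏ j ∈ Finset.Icc l m, ENNReal.ofReal (1 - q j)) ^ 2 *
        ∫⁻ x : UnitAddCircle, ∫⁻ y : UnitAddCircle,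
          ∏ j ∈ Finset.Icc l m,
            ENNReal.ofReal (1 + q j / (1 - q j) *
              (if dist x y < 2 * r (n (j + 1)) then (1:ℝ) else 0)) := by
  have hdisj : (Finset.Icc l m : Set ℕ).PairwiseDisjoint
      fun j => (Finset.Ioc (n (j - 1)) (n j) : Set ℕ) := by
    have h := hn.monotone.pairwise_disjoint_on_Ioc_pred.set_pairwise (Finset.Icc l m : Set ℕ)
    simp only [Order.pred_eq_sub_one] at h
    simp only [Finset.coe_Ioc]
    exact h
  have hne (j) (hj : j ∈ Finset.Icc l m) : (Finset.Ioc (n (j - 1)) (n j)).Nonempty :=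
    Finset.nonempty_Ioc.mpr (hn (by grind))
  have hpoint := measure_mem_inter_mem_biInter_biUnion_ball_le hmeas hindep hunif hdisj hne
    (fun j => hr0 (n (j + 1))) (fun j => (hr2 (n (j + 1))).le)
  simp only [Nat.card_Ioc, ← hq] at hpoint
  have hK : (∏ j ∈ Finset.Icc l m, ENNReal.ofReal (1 - q j)) ^ 2 ≠ ⊤ :=
    ENNReal.pow_ne_top (ENNReal.prod_ne_top fun _ _ => ENNReal.ofReal_ne_top)
  calc _ = ∫⁻ x, ∫⁻ y, μ {a | x ∈ _ ∧ y ∈ _} :=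
        lintegral_measure_sq_eq_lintegral_lintegral
          (measurableSet_setOf_mem_biInter_biUnion_ball hmeas _ _ _)
    _ ≤ _ := lintegral_mono fun x => lintegral_mono fun y => hpoint x y
    _ = _ := by simp_rw [lintegral_const_mul' _ _ hK]

/-- Second-moment bound: `E[μ_{l,m}(T)²] ≤ K_{l,m}² ∬ Ψ_{l,m}(‖x-y‖) dx dy`, where
`μ_{l,m}` is Lebesgue measure restricted to `∩_{j=l}^m F_j`. -/
theorem stmt14 {Ω : Type*} [MeasurableSpace Ω] (μ : Measure Ω) [IsProbabilityMeasure μ]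
    (ω : ℕ → Ω → UnitAddCircle) (hmeas : ∀ k, Measurable (ω k))
    (hindep : iIndepFun ω μ)
    (hunif : ∀ k, Measure.map (ω k) μ = volume)
    (r : ℕ → ℝ) (hr0 : ∀ k, 0 < r k) (hr2 : ∀ k, r k < 1/2)
    (n : ℕ → ℕ) (hn : StrictMono n)
    (l m : ℕ) (hl : 1 ≤ l) (hlm : l ≤ m)
    (q : ℕ → ℝ) (hq : ∀ j, q j = (1 - 2 * r (n (j + 1))) ^ (n j - n (j - 1))) :
    ∫⁻ a, (volume (⋂ j ∈ Finset.Icc l m,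
        ⋃ k ∈ Finset.Ioc (n (j - 1)) (n j), Metric.ball (ω k a) (r (n (j + 1))))) ^ 2 ∂μ
      ≤ (∏ j ∈ Finset.Icc l m, ENNReal.ofReal (1 - q j)) ^ 2 *
        ∫⁻ x : UnitAddCircle, ∫⁻ y : UnitAddCircle,
          ∏ j ∈ Finset.Icc l m,
            ENNReal.ofReal (1 + q j / (1 - q j) *
              (if dist x y < 2 * r (n (j + 1)) then (1:ℝ) else 0)) :=
  stmt14_general μ ω hmeas hindep hunif r hr0 hr2 n hn l m hl q hq
end
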